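/- arXiv:1810.03924 — 3 statements merged into one kernel-verified Lean document; each statement's English description precedes it below -/
import Mathlib

section
/- Let E ⊆ ℝ^N and v : E → ℝ be measurable. If there exists a measurable function I : E → [0,∞) such that |v(x) − v(y)| ≤ (I(x) + I(y))|x − y| for every x, y ∈ E, then v is approximately differentiable at almost every point of E, and its approximate derivative satisfies |apD v| ≤ 2I almost everywhere in E. -/
/-!
On `S q = {x ∈ E | I x ≤ q}`, `q ∈ ℚ`, the function `v` is `2q`-Lipschitz, so it extends to a
Lipschitz function `g q` on the whole space, differentiable almost everywhere by Rademacher's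
theorem. At almost every `y ∈ E` all `g q` are differentiable and every `S q ∋ y` has density one
at `y`. Since `v = g q` off a set of density zero, `D (g q) y` is an approximate derivative of `v`.
A derivative is controlled by the values on a set of density one, and on `S q'` we have
`|v x - v y| ≤ (q' + I y) ‖x - y‖`, whence `‖D (g q) y‖ ≤ q' + I y` for all rationals `q' > I y`.
-/

open MeasureTheory Metric Set Filter
open scoped ENNReal Topology

noncomputable section

/-- Approximate differentiability of `v` at `y` relative to the set `E`:
the set of points of `E` where the first-order Taylor error exceeds `ε ‖x - y‖`
has vanishing density at `y`. -/
def ApproxDerivWithin {N : ℕ} (v : EuclideanSpace ℝ (Fin N) → ℝ)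
    (E : Set (EuclideanSpace ℝ (Fin N))) (y : EuclideanSpace ℝ (Fin N))
    (L : EuclideanSpace ℝ (Fin N) →L[ℝ] ℝ) : Prop :=
  ∀ ε > (0 : ℝ),
    Tendsto
      (fun r : ℝ =>
        volume {x | x ∈ E ∩ ball y r ∧ ε * ‖x - y‖ < |v x - v y - L (x - y)|} /
          volume (ball y r))
      (𝓝[>] 0) (𝓝 0)

def HasDensityZeroAt {X : Type*} [PseudoMetricSpace X] [MeasurableSpace X] (μ : Measure X)
    (s : Set X) (y : X) : Prop :=
  Tendsto (fun r => μ (s ∩ closedBall y r) / μ (closedBall y r)) (𝓝[>] 0) (𝓝 0)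

theorem HasDensityZeroAt.mono {X : Type*} [PseudoMetricSpace X] [MeasurableSpace X]
    {μ : Measure X} {s t : Set X} {y : X} (h : HasDensityZeroAt μ s y) (hts : t ⊆ s) :
    HasDensityZeroAt μ t y :=
  tendsto_of_tendsto_of_tendsto_of_le_of_le tendsto_const_nhds h (fun _ => zero_le)
    fun _ => ENNReal.div_le_div_right (measure_mono (inter_subset_inter_left _ hts)) _

theorem ae_hasDensityZeroAt_compl {X : Type*} [MetricSpace X] [MeasurableSpace X] [BorelSpace X]
    [SecondCountableTopology X] [HasBesicovitchCovering X] (μ : Measure X)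
    [IsLocallyFiniteMeasure μ] {s : Set X} (hs : MeasurableSet s) :
    ∀ᵐ y ∂μ, y ∈ s → HasDensityZeroAt μ sᶜ y := by
  filter_upwards [Besicovitch.ae_tendsto_measure_inter_div_of_measurableSet μ hs.compl]
    with y hy hys
  simpa [HasDensityZeroAt, hys] using hy

section AddHaar

variable {F : Type*} [NormedAddCommGroup F] [NormedSpace ℝ F] [FiniteDimensional ℝ F]
  [MeasurableSpace F] [BorelSpace F] {μ : Measure F} [μ.IsAddHaarMeasure]

theorem addHaar_closedBall_eq_addHaar_ball_of_pos (x : F) {r : ℝ} (hr : 0 < r) :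
    μ (closedBall x r) = μ (ball x r) := by
  rw [Measure.addHaar_closedBall μ x hr.le, Measure.addHaar_ball_of_pos μ x hr]

theorem HasDensityZeroAt.eventually_inter_ball_nonempty {s : Set F} {y : F}
    (h : HasDensityZeroAt μ sᶜ y) {δ : ℝ} (hδ : 0 < δ) :
    ∀ᶠ r in 𝓝[>] 0, ∀ p ∈ closedBall y r, (s ∩ ball p (δ * r)).Nonempty := by
  set κ : ℝ≥0∞ := ENNReal.ofReal ((δ / (1 + δ)) ^ Module.finrank ℝ F)
  have hκ : 0 < κ := ENNReal.ofReal_pos.2 (by positivity)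
  filter_upwards [eventually_nhdsGT_zero_mul_left (x := 1 + δ) (by positivity)
    (h.eventually_lt_const hκ), self_mem_nhdsWithin] with r hr (hr0 : 0 < r) p hp
  by_contra hempty
  have hsub : ball p (δ * r) ⊆ sᶜ ∩ closedBall y ((1 + δ) * r) := by
    refine fun x hx => ⟨fun hxs => hempty ⟨x, hxs, hx⟩, ?_⟩
    calc dist x y ≤ dist x p + dist p y := dist_triangle _ _ _
      _ ≤ δ * r + r := add_le_add (mem_ball.1 hx).le hp
      _ = (1 + δ) * r := by ring
  have hvol : μ (ball p (δ * r)) = κ * μ (closedBall y ((1 + δ) * r)) := by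
    rw [Measure.addHaar_ball_of_pos μ p (by positivity),
      Measure.addHaar_closedBall μ y (by positivity), ← mul_assoc,
      ← ENNReal.ofReal_mul (by positivity), ← mul_pow]
    congr 3
    field_simp
  rw [ENNReal.div_lt_iff (Or.inl (measure_closedBall_pos μ y (by positivity)).ne')
    (Or.inl measure_closedBall_lt_top.ne), ← hvol] at hr
  exact (measure_mono hsub).not_gt hr

theorem HasFDerivAt.norm_le_of_hasDensityZeroAt_compl {G : Type*} [NormedAddCommGroup G]
    [NormedSpace ℝ G] {g : F → G} {L : F →L[ℝ] G} {s : Set F} {y : F} {K : ℝ}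
    (hg : HasFDerivAt g L y) (hs : HasDensityZeroAt μ sᶜ y) (hK : 0 ≤ K)
    (hbound : ∀ x ∈ s, ‖g x - g y‖ ≤ K * ‖x - y‖) : ‖L‖ ≤ K := by
  refine L.opNorm_le_of_unit_norm hK fun u hu => ?_
  suffices key : ∀ δ > 0, ‖L u‖ ≤ (K + δ) * (1 + δ) + ‖L‖ * δ by
    have hlim : Tendsto (fun δ : ℝ => (K + δ) * (1 + δ) + ‖L‖ * δ) (𝓝[>] 0) (𝓝 K) := by
      refine tendsto_nhdsWithin_of_tendsto_nhds ?_
      simpa using (Continuous.tendsto (f := fun δ : ℝ => (K + δ) * (1 + δ) + ‖L‖ * δ)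
        (by fun_prop) 0)
    exact ge_of_tendsto hlim (eventually_nhdsWithin_of_forall key)
  intro δ hδ
  obtain ⟨ρ, hρ, hlo⟩ := Metric.eventually_nhds_iff.1 (hg.isLittleO.def hδ)
  obtain ⟨r, hr, hr0, hrρ⟩ := ((hs.eventually_inter_ball_nonempty hδ).and
    (Ioo_mem_nhdsGT (div_pos hρ (by positivity : 0 < 1 + δ)))).exists
  set p := y + r • u
  have hpy : ‖p - y‖ = r := by simp [p, norm_smul, hu, hr0.le]
  obtain ⟨x, hxs, hxp⟩ := hr p (mem_closedBall_iff_norm.2 hpy.le)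
  have hxy : ‖x - y‖ ≤ (1 + δ) * r := by
    calc ‖x - y‖ ≤ ‖x - p‖ + ‖p - y‖ := norm_sub_le_norm_sub_add_norm_sub _ _ _
      _ ≤ δ * r + r := by
        gcongr
        · exact (mem_ball_iff_norm.1 hxp).le
        · exact hpy.le
      _ = (1 + δ) * r := by ring
  have hlin : ‖L (x - y)‖ ≤ (K + δ) * ‖x - y‖ := by
    have hsmall : dist x y < ρ := by
      rw [dist_eq_norm]
      calc ‖x - y‖ ≤ (1 + δ) * r := hxy
        _ < ρ := by rwa [lt_div_iff₀' (by positivity)] at hrρ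
    calc ‖L (x - y)‖ ≤ ‖g x - g y‖ + ‖g x - g y - L (x - y)‖ := norm_le_insert _ _
      _ ≤ K * ‖x - y‖ + δ * ‖x - y‖ := add_le_add (hbound x hxs) (hlo hsmall)
      _ = (K + δ) * ‖x - y‖ := by ring
  have hLu : r • L u = L (x - y) - L (x - p) := by
    rw [← map_smul, ← map_sub]
    congr 1
    simp only [p]
    abel
  have : r * ‖L u‖ ≤ r * ((K + δ) * (1 + δ) + ‖L‖ * δ) := by
    calc r * ‖L u‖ = ‖L (x - y) - L (x - p)‖ := by
          rw [← hLu, norm_smul, Real.norm_of_nonneg hr0.le]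
      _ ≤ ‖L (x - y)‖ + ‖L (x - p)‖ := norm_sub_le _ _
      _ ≤ (K + δ) * ((1 + δ) * r) + ‖L‖ * (δ * r) := by
        gcongr
        · exact hlin.trans (by gcongr)
        · exact L.le_of_opNorm_le le_rfl _ |>.trans
            (by gcongr; exact (mem_ball_iff_norm.1 hxp).le)
      _ = r * ((K + δ) * (1 + δ) + ‖L‖ * δ) := by ring
  exact le_of_mul_le_mul_left this hr0

theorem HasFDerivAt.norm_le_two_mul_of_eqOn_sublevel {v I g : F → ℝ} {L : F →L[ℝ] ℝ}
    {E : Set F} {y : F} {c : ℝ} (hg : HasFDerivAt g L y) (hyE : y ∈ E) (hIy : 0 ≤ I y)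
    (hc : I y < c) (hlip : ∀ x ∈ E, |v x - v y| ≤ (I x + I y) * ‖x - y‖)
    (hvg : EqOn v g {x | x ∈ E ∧ I x ≤ c})
    (hden : ∀ q : ℚ, I y < q → HasDensityZeroAt μ {x | x ∈ E ∧ I x ≤ q}ᶜ y) :
    ‖L‖ ≤ 2 * I y := by
  suffices h : ∀ q : ℚ, I y < q → ‖L‖ ≤ q + I y by
    linarith [le_of_forall_lt_rat_imp_le fun q hq => sub_le_iff_le_add.2 (h q hq)]
  intro q hq
  have hgy : g y = v y := (hvg ⟨hyE, hc.le⟩).symm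
  -- `g` agrees with `v` only up to level `c`: pass to a rational level below both `q` and `c`
  obtain ⟨q', hyq', hq'q, hq'c⟩ : ∃ q' : ℚ, I y < q' ∧ (q' : ℝ) ≤ q ∧ (q' : ℝ) ≤ c := by
    obtain ⟨q', hq'⟩ := exists_rat_btwn (lt_min hq hc)
    exact ⟨q', hq'.1, hq'.2.le.trans (min_le_left _ _), hq'.2.le.trans (min_le_right _ _)⟩
  refine (hg.norm_le_of_hasDensityZeroAt_compl (K := q' + I y) (hden q' hyq')
    (by linarith) fun x hx => ?_).trans (by linarith)
  rw [← hvg ⟨hx.1, hx.2.trans hq'c⟩, hgy, Real.norm_eq_abs]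
  exact (hlip x hx.1).trans (by gcongr; linarith [hx.2])

end AddHaar

theorem HasFDerivAt.approxDerivWithin_of_eqOn {N : ℕ} {E S : Set (EuclideanSpace ℝ (Fin N))}
    {v g : EuclideanSpace ℝ (Fin N) → ℝ} {L : EuclideanSpace ℝ (Fin N) →L[ℝ] ℝ}
    {y : EuclideanSpace ℝ (Fin N)} (hg : HasFDerivAt g L y) (hvg : EqOn v g S) (hy : y ∈ S)
    (hden : HasDensityZeroAt volume (E \ S) y) : ApproxDerivWithin v E y L := by
  intro ε hε
  obtain ⟨ρ, hρ, hlo⟩ := Metric.eventually_nhds_iff.1 (hg.isLittleO.def hε)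
  refine tendsto_of_tendsto_of_tendsto_of_le_of_le' tendsto_const_nhds hden
    (Eventually.of_forall fun _ => zero_le) ?_
  filter_upwards [Ioo_mem_nhdsGT hρ] with r hr
  have hbad : {x | x ∈ E ∩ ball y r ∧ ε * ‖x - y‖ < |v x - v y - L (x - y)|}
      ⊆ (E \ S) ∩ closedBall y r := by
    rintro x ⟨⟨hxE, hxr⟩, hx⟩
    refine ⟨⟨hxE, fun hxS => hx.not_ge ?_⟩, ball_subset_closedBall hxr⟩
    rw [hvg hxS, hvg hy, ← Real.norm_eq_abs]
    exact hlo ((mem_ball.1 hxr).trans hr.2)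
  rw [← addHaar_closedBall_eq_addHaar_ball_of_pos y hr.1]
  exact ENNReal.div_le_div_right (measure_mono hbad) _

theorem measurableSet_mem_and_le_of_measurable_domRestrict {α : Type*} [MeasurableSpace α]
    {E : Set α} {I : α → ℝ} (hE : MeasurableSet E) (hI : Measurable (E.domRestrict I)) (c : ℝ) :
    MeasurableSet {x | x ∈ E ∧ I x ≤ c} := by
  convert hE.subtype_image (hI (measurableSet_Iic (a := c)))
  ext x
  simp [and_comm]

theorem stmt0_general {N : ℕ} (E : Set (EuclideanSpace ℝ (Fin N))) (hE : MeasurableSet E)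
    (v I : EuclideanSpace ℝ (Fin N) → ℝ)
    (hI : Measurable (E.restrict I))
    (hI0 : ∀ x ∈ E, 0 ≤ I x)
    (hlip : ∀ x ∈ E, ∀ y ∈ E, |v x - v y| ≤ (I x + I y) * ‖x - y‖) :
    ∀ᵐ y ∂(volume.restrict E),
      ∃ L : EuclideanSpace ℝ (Fin N) →L[ℝ] ℝ,
        ApproxDerivWithin v E y L ∧ ‖L‖ ≤ 2 * I y := by
  set S : ℚ → Set (EuclideanSpace ℝ (Fin N)) := fun q => {x | x ∈ E ∧ I x ≤ q}
  have hS (q : ℚ) : MeasurableSet (S q) :=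
    measurableSet_mem_and_le_of_measurable_domRestrict hE hI q
  have hvS (q : ℚ) : LipschitzOnWith (2 * q : ℝ).toNNReal v (S q) :=
    LipschitzOnWith.of_dist_le' fun x hx z hz => by
      rw [Real.dist_eq, dist_eq_norm]
      exact (hlip x hx.1 z hz.1).trans (by gcongr; linarith [hx.2, hz.2])
  choose g hg hvg using fun q => (hvS q).extend_real
  filter_upwards [ae_restrict_mem hE,
    ae_restrict_of_ae (ae_all_iff.2 fun q => (hg q).ae_differentiableAt),
    ae_restrict_of_ae (ae_all_iff.2 fun q => ae_hasDensityZeroAt_compl volume (hS q))]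
    with y hyE hdiff hdens
  obtain ⟨q₀, hq₀⟩ := exists_rat_gt (I y)
  have hL := (hdiff q₀).hasFDerivAt
  exact ⟨_, hL.approxDerivWithin_of_eqOn (hvg q₀) ⟨hyE, hq₀.le⟩
    ((hdens q₀ ⟨hyE, hq₀.le⟩).mono fun x hx => hx.2),
    hL.norm_le_two_mul_of_eqOn_sublevel hyE (hI0 y hyE) hq₀ (hlip · · y hyE) (hvg q₀)
      fun q hq => hdens q ⟨hyE, hq.le⟩⟩

/-- a Lipschitz-type estimate with variable coefficient implies
approximate differentiability almost everywhere, with `|apD v| ≤ 2 I` a.e. on `E`. -/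
theorem stmt0 {N : ℕ} (E : Set (EuclideanSpace ℝ (Fin N))) (hE : MeasurableSet E)
    (v I : EuclideanSpace ℝ (Fin N) → ℝ)
    (hv : Measurable (E.restrict v)) (hI : Measurable (E.restrict I))
    (hI0 : ∀ x ∈ E, 0 ≤ I x)
    (hlip : ∀ x ∈ E, ∀ y ∈ E, |v x - v y| ≤ (I x + I y) * ‖x - y‖) :
    ∀ᵐ y ∂(volume.restrict E),
      ∃ L : EuclideanSpace ℝ (Fin N) →L[ℝ] ℝ,
        ApproxDerivWithin v E y L ∧ ‖L‖ ≤ 2 * I y :=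
  stmt0_general E hE v I hI hI0 hlip
end
end

section
/- Let E ⊆ ℝ^N and v : E → ℝ. Suppose for every t > 0 there is a measurable function I_t : ℝ^N → [0,∞] with |v(x) − v(y)| ≤ (I_t(x) + I_t(y))|x − y| for all x, y ∈ E and |{I_t > t}| ≤ A′/t, for a constant A′ > 0 independent of t. Then there exists a measurable H : ℝ^N → [0,∞] with |v(x) − v(y)| ≤ (H(x) + H(y))|x − y| for all x, y ∈ E and with weak-L^1 quasinorm |H|_{L^1_w(ℝ^N)} ≤ 8A′. -/
open MeasureTheory Metric Set Filter
open scoped ENNReal Topology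

noncomputable section

/-- uniformization principle: if for every `t > 0` there is a measurable
`I_t : ℝ^N → [0,∞]` with the Lipschitz-type estimate on `E` and
`|{I_t > t}| ≤ A′/t`, then there is a single measurable `H : ℝ^N → [0,∞]` with the
Lipschitz-type estimate and weak-`L¹` quasinorm `≤ 8A′`. -/
theorem stmt8 {N : ℕ} (E : Set (EuclideanSpace ℝ (Fin N)))
    (v : EuclideanSpace ℝ (Fin N) → ℝ) (A' : ℝ) (hA' : 0 < A')
    (h : ∀ t : ℝ, 0 < t → ∃ I : EuclideanSpace ℝ (Fin N) → ℝ≥0∞, Measurable I ∧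
      (∀ x ∈ E, ∀ y ∈ E,
        ENNReal.ofReal |v x - v y| ≤ (I x + I y) * ENNReal.ofReal ‖x - y‖) ∧
      volume {x | ENNReal.ofReal t < I x} ≤ ENNReal.ofReal (A' / t)) :
    ∃ H : EuclideanSpace ℝ (Fin N) → ℝ≥0∞, Measurable H ∧
      (∀ x ∈ E, ∀ y ∈ E,
        ENNReal.ofReal |v x - v y| ≤ (H x + H y) * ENNReal.ofReal ‖x - y‖) ∧
      ∀ t : ℝ, 0 < t →
        ENNReal.ofReal t * volume {x | ENNReal.ofReal t < H x} ≤
          ENNReal.ofReal (8 * A') := by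
  classical
  choose I hm hl hv using fun n : ℤ => h ((2:ℝ)^n) (zpow_pos (by norm_num) n)
  set H : EuclideanSpace ℝ (Fin N) → ℝ≥0∞ := fun x =>
    ⨆ n : ℤ, if ENNReal.ofReal ((2:ℝ)^n) < I n x then ENNReal.ofReal ((2:ℝ)^(n+2)) else 0
    with hHdef
  have hH_ge : ∀ (n : ℤ) (x), ENNReal.ofReal ((2:ℝ)^n) < I n x →
      ENNReal.ofReal ((2:ℝ)^(n+2)) ≤ H x := by
    intro n x hx
    refine le_trans ?_ (le_iSup _ n)
    rw [if_pos hx]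
  refine ⟨H, ?_, ?_, ?_⟩
  · exact Measurable.iSup fun n =>
      Measurable.ite ((hm n) measurableSet_Ioi) measurable_const measurable_const
  · intro x hx y hy
    by_cases hS : ∃ n : ℤ, ENNReal.ofReal ((2:ℝ)^n) < I n x ∨ ENNReal.ofReal ((2:ℝ)^n) < I n y
    · by_cases hbd : ∃ m : ℤ, ∀ n : ℤ,
          (ENNReal.ofReal ((2:ℝ)^n) < I n x ∨ ENNReal.ofReal ((2:ℝ)^n) < I n y) → n ≤ m
      · obtain ⟨m, hmS, hmax⟩ := Int.exists_greatest_of_bdd hbd hS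
        have hnot : ¬(ENNReal.ofReal ((2:ℝ)^(m+1)) < I (m+1) x ∨
            ENNReal.ofReal ((2:ℝ)^(m+1)) < I (m+1) y) := by
          intro hc
          have := hmax (m+1) hc
          omega
        push_neg at hnot
        have hxb : I (m+1) x ≤ ENNReal.ofReal ((2:ℝ)^(m+1)) := hnot.1
        have hyb : I (m+1) y ≤ ENNReal.ofReal ((2:ℝ)^(m+1)) := hnot.2
        have hsum : ENNReal.ofReal ((2:ℝ)^(m+1)) + ENNReal.ofReal ((2:ℝ)^(m+1))
            = ENNReal.ofReal ((2:ℝ)^(m+2)) := by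
          rw [← ENNReal.ofReal_add (by positivity) (by positivity)]
          congr 1
          rw [show m + 2 = (m+1) + 1 by ring, zpow_add₀ (by norm_num : (2:ℝ) ≠ 0) (m+1) 1]
          ring
        have hHxy : ENNReal.ofReal ((2:ℝ)^(m+2)) ≤ H x + H y := by
          rcases hmS with hc | hc
          · exact (hH_ge m x hc).trans le_self_add
          · exact (hH_ge m y hc).trans le_add_self
        calc ENNReal.ofReal |v x - v y|
            ≤ (I (m+1) x + I (m+1) y) * ENNReal.ofReal ‖x - y‖ := hl (m+1) x hx y hy
          _ ≤ (ENNReal.ofReal ((2:ℝ)^(m+1)) + ENNReal.ofReal ((2:ℝ)^(m+1)))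
                * ENNReal.ofReal ‖x - y‖ := mul_le_mul_left (add_le_add hxb hyb) _
          _ = ENNReal.ofReal ((2:ℝ)^(m+2)) * ENNReal.ofReal ‖x - y‖ := by rw [hsum]
          _ ≤ (H x + H y) * ENNReal.ofReal ‖x - y‖ := mul_le_mul_left hHxy _
      · -- unbounded: H x + H y = ⊤
        push_neg at hbd
        have htop : H x + H y = ⊤ := by
          apply ENNReal.eq_top_of_forall_nnreal_le
          intro r
          obtain ⟨k, hk⟩ := pow_unbounded_of_one_lt (r : ℝ) (by norm_num : (1:ℝ) < 2)
          obtain ⟨n, hnS, hn⟩ := hbd k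
          have hle : (r : ℝ) ≤ (2:ℝ)^(n+2) := by
            refine hk.le.trans ?_
            rw [← zpow_natCast (2:ℝ) k]
            exact zpow_le_zpow_right₀ (by norm_num) (by omega)
          have : (r : ℝ≥0∞) ≤ ENNReal.ofReal ((2:ℝ)^(n+2)) := by
            rw [← ENNReal.ofReal_coe_nnreal]
            exact ENNReal.ofReal_le_ofReal hle
          refine this.trans ?_
          rcases hnS with hc | hc
          · exact (hH_ge n x hc).trans le_self_add
          · exact (hH_ge n y hc).trans le_add_self
        by_cases hxy : ‖x - y‖ = 0
        · have : x = y := by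
            have := norm_eq_zero.mp hxy
            exact sub_eq_zero.mp this
          simp [this]
        · have h0 : ENNReal.ofReal ‖x - y‖ ≠ 0 := by
            simp only [ne_eq, ENNReal.ofReal_eq_zero, not_le]
            exact lt_of_le_of_ne (norm_nonneg _) (Ne.symm hxy)
          rw [htop, ENNReal.top_mul h0]
          exact le_top
    · -- for every n both are small, hence v x = v y
      push_neg at hS
      have hreal : ∀ n : ℤ, |v x - v y| ≤ (2:ℝ)^(n+1) * ‖x - y‖ := by
        intro n
        have h1 : ENNReal.ofReal |v x - v y|
            ≤ (ENNReal.ofReal ((2:ℝ)^n) + ENNReal.ofReal ((2:ℝ)^n))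
              * ENNReal.ofReal ‖x - y‖ :=
          (hl n x hx y hy).trans (mul_le_mul_left (add_le_add (hS n).1 (hS n).2) _)
        have hsum : ENNReal.ofReal ((2:ℝ)^n) + ENNReal.ofReal ((2:ℝ)^n)
            = ENNReal.ofReal ((2:ℝ)^(n+1)) := by
          rw [← ENNReal.ofReal_add (by positivity) (by positivity)]
          congr 1
          rw [zpow_add₀ (by norm_num : (2:ℝ) ≠ 0) n 1]
          ring
        rw [hsum, ← ENNReal.ofReal_mul (by positivity)] at h1
        exact (ENNReal.ofReal_le_ofReal_iff (by positivity)).mp h1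
      have hveq : |v x - v y| = 0 := by
        by_contra hne
        have hpos : 0 < |v x - v y| := lt_of_le_of_ne (abs_nonneg _) (Ne.symm hne)
        by_cases hxy : ‖x - y‖ = 0
        · have := hreal 0
          rw [hxy, mul_zero] at this
          exact absurd this (not_le.mpr hpos)
        · have hxypos : 0 < ‖x - y‖ := lt_of_le_of_ne (norm_nonneg _) (Ne.symm hxy)
          obtain ⟨k, hk⟩ := exists_pow_lt_of_lt_one
            (div_pos hpos hxypos) (by norm_num : (1/2 : ℝ) < 1)
          have h2 : (2:ℝ)^((-(k:ℤ)-1) + 1) = (1/2 : ℝ)^k := by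
            rw [show (-(k:ℤ)-1) + 1 = -(k:ℤ) by ring, zpow_neg, zpow_natCast,
              one_div, inv_pow]
          have := hreal (-(k:ℤ)-1)
          rw [h2] at this
          have : |v x - v y| < (|v x - v y| / ‖x - y‖) * ‖x - y‖ :=
            this.trans_lt (mul_lt_mul_of_pos_right hk hxypos)
          rw [div_mul_cancel₀ _ hxy] at this
          exact lt_irrefl _ this
      rw [hveq]
      simp
  · intro t ht
    obtain ⟨n₀, hn₀l, hn₀r⟩ := exists_mem_Ico_zpow ht (by norm_num : (1:ℝ) < 2)
    set B : ℤ → Set (EuclideanSpace ℝ (Fin N)) :=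
      fun n => {x | ENNReal.ofReal ((2:ℝ)^n) < I n x} with hBdef
    have hsub : {x | ENNReal.ofReal t < H x} ⊆ ⋃ k : ℕ, B (n₀ - 1 + k) := by
      intro x hx
      simp only [mem_setOf_eq, hHdef, lt_iSup_iff] at hx
      obtain ⟨n, hn⟩ := hx
      by_cases hc : ENNReal.ofReal ((2:ℝ)^n) < I n x
      · rw [if_pos hc] at hn
        have ht2 : t < (2:ℝ)^(n+2) := by
          by_contra hle
          exact absurd hn (not_lt.mpr (ENNReal.ofReal_le_ofReal (not_lt.mp hle)))
        have hlt : (2:ℝ)^n₀ < (2:ℝ)^(n+2) := lt_of_le_of_lt hn₀l ht2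
        have hnn : n₀ - 1 ≤ n := by
          have := (zpow_lt_zpow_iff_right₀ (by norm_num : (1:ℝ) < 2)).mp hlt
          omega
        refine mem_iUnion.mpr ⟨(n - (n₀ - 1)).toNat, ?_⟩
        have heq : n₀ - 1 + ((n - (n₀ - 1)).toNat : ℤ) = n := by omega
        rw [hBdef]
        simp only [mem_setOf_eq]
        rw [heq]
        exact hc
      · rw [if_neg hc] at hn
        exact absurd hn (by simp)
    have hvol : volume {x | ENNReal.ofReal t < H x}
        ≤ ENNReal.ofReal (A' * (2:ℝ)^(1 - n₀)) * 2 := by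
      calc volume {x | ENNReal.ofReal t < H x}
          ≤ ∑' k : ℕ, volume (B (n₀ - 1 + k)) :=
            (measure_mono hsub).trans (measure_iUnion_le _)
        _ ≤ ∑' k : ℕ, ENNReal.ofReal (A' / (2:ℝ)^(n₀ - 1 + (k:ℤ))) :=
            ENNReal.tsum_le_tsum fun k => hv _
        _ = ∑' k : ℕ, ENNReal.ofReal (A' * (2:ℝ)^(1 - n₀)) * (ENNReal.ofReal (1/2))^k := by
            congr 1; funext k
            rw [← ENNReal.ofReal_pow (by norm_num), ← ENNReal.ofReal_mul (by positivity)]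
            congr 1
            rw [div_eq_iff (by positivity),
              show ((1:ℝ)/2)^k = (2:ℝ)^(-(k:ℤ)) by
                rw [zpow_neg, zpow_natCast, one_div, inv_pow],
              mul_assoc, mul_assoc, ← zpow_add₀ (by norm_num : (2:ℝ) ≠ 0),
              ← zpow_add₀ (by norm_num : (2:ℝ) ≠ 0),
              show (1 - n₀) + (-(k:ℤ) + (n₀ - 1 + (k:ℤ))) = 0 by ring, zpow_zero, mul_one]
        _ = ENNReal.ofReal (A' * (2:ℝ)^(1 - n₀)) * ∑' k : ℕ, (ENNReal.ofReal (1/2))^k :=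
            ENNReal.tsum_mul_left
        _ = ENNReal.ofReal (A' * (2:ℝ)^(1 - n₀)) * 2 := by
            congr 1
            rw [show ENNReal.ofReal (1/2) = 2⁻¹ by
              rw [one_div, ENNReal.ofReal_inv_of_pos (by norm_num)]; norm_num]
            rw [ENNReal.tsum_geometric, ENNReal.one_sub_inv_two, inv_inv]
    calc ENNReal.ofReal t * volume {x | ENNReal.ofReal t < H x}
        ≤ ENNReal.ofReal ((2:ℝ)^(n₀+1)) * (ENNReal.ofReal (A' * (2:ℝ)^(1 - n₀)) * 2) :=
          mul_le_mul' (ENNReal.ofReal_le_ofReal hn₀r.le) hvol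
      _ = ENNReal.ofReal ((2:ℝ)^(n₀+1) * (A' * (2:ℝ)^(1 - n₀))) * 2 := by
          rw [← mul_assoc, ← ENNReal.ofReal_mul (by positivity)]
      _ = ENNReal.ofReal (8 * A') := by
          rw [show (2:ℝ≥0∞) = ENNReal.ofReal 2 by norm_num,
            ← ENNReal.ofReal_mul (by positivity)]
          congr 1
          have h4 : (2:ℝ)^(n₀+1) * (2:ℝ)^(1 - n₀) = 4 := by
            rw [← zpow_add₀ (by norm_num : (2:ℝ) ≠ 0), show n₀ + 1 + (1 - n₀) = 2 by ring]
            norm_num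
          linear_combination 2 * A' * h4
end
end

section
/- Let F ⊆ ℝ^N be a nonempty closed set and μ a finite Borel measure with |μ|(F) = 0. Then ∫_F ∫_{ℝ^N \ F} d(z, F)/|y − z|^{N+1} d|μ|(z) dy ≤ C″ |μ|(ℝ^N \ F), where d(z,F) is the distance from z to F and C″ depends only on N. -/
/-!
For `z ∉ F` put `d = infDist z F`, so that `F` misses `ball z d`. On the dyadic annulus
`2^k d ≤ ‖y - z‖ < 2^(k+1) d` the kernel `d / ‖y - z‖^(N+1)` is at most `d / (2^k d)^(N+1)` while
the annulus has volume at most `(2^(k+1) d)^N` times that of the unit ball; the product is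
`2^N 2^(-k)`, so `∫_F d / ‖y - z‖^(N+1) dy ≤ 2^(N+1) vol(ball 0 1)` uniformly in `z`.
Tonelli then bounds the double integral by this constant times `μ Fᶜ`.
-/

open MeasureTheory Metric Set
open scoped ENNReal

lemma compl_ball_subset_iUnion_dyadic_annuli {X : Type*} [PseudoMetricSpace X] (z : X) {d : ℝ}
    (hd : 0 < d) :
    (ball z d)ᶜ ⊆ ⋃ k : ℕ, ball z (2 ^ (k + 1) * d) \ ball z (2 ^ k * d) := by
  intro y hy
  rw [mem_compl_iff, mem_ball, not_lt, ← one_le_div hd] at hy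
  obtain ⟨k, hk_le, hk_lt⟩ := exists_nat_pow_near hy one_lt_two
  refine mem_iUnion.2 ⟨k, mem_ball.2 ?_, fun hk => ?_⟩
  · exact (div_lt_iff₀ hd).1 hk_lt
  · exact (le_div_iff₀ hd).1 hk_le |>.not_gt (mem_ball.1 hk)

variable {E : Type*} [NormedAddCommGroup E] [NormedSpace ℝ E] [FiniteDimensional ℝ E]
  [MeasurableSpace E] [BorelSpace E] (μ : Measure E) [μ.IsAddHaarMeasure]

lemma setLIntegral_dyadic_annulus_le (z : E) {d : ℝ} (hd : 0 < d) (k : ℕ) :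
    ∫⁻ y in ball z (2 ^ (k + 1) * d) \ ball z (2 ^ k * d),
        ENNReal.ofReal (d / ‖y - z‖ ^ (Module.finrank ℝ E + 1)) ∂μ ≤
      2 ^ Module.finrank ℝ E * 2⁻¹ ^ k * μ (ball 0 1) := by
  set n := Module.finrank ℝ E
  calc ∫⁻ y in ball z (2 ^ (k + 1) * d) \ ball z (2 ^ k * d),
          ENNReal.ofReal (d / ‖y - z‖ ^ (n + 1)) ∂μ
      ≤ ∫⁻ _ in ball z (2 ^ (k + 1) * d), ENNReal.ofReal (d / (2 ^ k * d) ^ (n + 1)) ∂μ := by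
        refine (setLIntegral_mono measurable_const fun y hy => ?_).trans
          (lintegral_mono_set sdiff_subset)
        have hy : 2 ^ k * d ≤ ‖y - z‖ := by simpa [dist_eq_norm] using hy.2
        gcongr
    _ = ENNReal.ofReal (d / (2 ^ k * d) ^ (n + 1) * (2 ^ (k + 1) * d) ^ n) * μ (ball 0 1) := by
        rw [setLIntegral_const, Measure.addHaar_ball_of_pos μ z (by positivity), ← mul_assoc,
          ← ENNReal.ofReal_mul (by positivity)]
    _ = 2 ^ n * 2⁻¹ ^ k * μ (ball 0 1) := by
        congr 1
        have : d / (2 ^ k * d) ^ (n + 1) * (2 ^ (k + 1) * d) ^ n = 2 ^ n * 2⁻¹ ^ k := by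
          rw [inv_pow]
          field_simp
          ring
        rw [this, ENNReal.ofReal_mul (by positivity), ENNReal.ofReal_pow (by positivity),
          ENNReal.ofReal_pow (by positivity), ENNReal.ofReal_inv_of_pos two_pos]
        norm_num

lemma setLIntegral_compl_ball_div_norm_pow_le (z : E) (d : ℝ) :
    ∫⁻ y in (ball z d)ᶜ, ENNReal.ofReal (d / ‖y - z‖ ^ (Module.finrank ℝ E + 1)) ∂μ ≤
      2 ^ (Module.finrank ℝ E + 1) * μ (ball 0 1) := by
  set n := Module.finrank ℝ E
  rcases le_or_gt d 0 with hd | hd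
  · have : ∀ y : E, ENNReal.ofReal (d / ‖y - z‖ ^ (n + 1)) = 0 := fun y =>
      ENNReal.ofReal_eq_zero.2 (div_nonpos_of_nonpos_of_nonneg hd (by positivity))
    simp [this]
  calc ∫⁻ y in (ball z d)ᶜ, ENNReal.ofReal (d / ‖y - z‖ ^ (n + 1)) ∂μ
      ≤ ∑' k : ℕ, ∫⁻ y in ball z (2 ^ (k + 1) * d) \ ball z (2 ^ k * d),
          ENNReal.ofReal (d / ‖y - z‖ ^ (n + 1)) ∂μ :=
        (lintegral_mono_set (compl_ball_subset_iUnion_dyadic_annuli z hd)).trans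
          (lintegral_iUnion_le _ _)
    _ ≤ ∑' k : ℕ, 2 ^ n * 2⁻¹ ^ k * μ (ball 0 1) :=
        ENNReal.tsum_le_tsum fun k => setLIntegral_dyadic_annulus_le μ z hd k
    _ = 2 ^ (n + 1) * μ (ball 0 1) := by
        rw [ENNReal.tsum_mul_right, ENNReal.tsum_mul_left, ENNReal.tsum_geometric,
          ENNReal.one_sub_inv_two, inv_inv, pow_succ]

lemma setLIntegral_infDist_div_norm_pow_le (F : Set E) (z : E) :
    ∫⁻ y in F, ENNReal.ofReal (infDist z F / ‖y - z‖ ^ (Module.finrank ℝ E + 1)) ∂μ ≤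
      2 ^ (Module.finrank ℝ E + 1) * μ (ball 0 1) :=
  (lintegral_mono_set (subset_compl_comm.1 ball_infDist_subset_compl)).trans
    (setLIntegral_compl_ball_div_norm_pow_le μ z _)

/-- Marcinkiewicz integral inequality: for a nonempty closed set
`F ⊆ ℝ^N` and a finite Borel measure `μ` with `μ(F) = 0`,
`∫_F ∫_{ℝ^N \ F} d(z,F)/|y-z|^{N+1} dμ(z) dy ≤ C″ μ(ℝ^N \ F)`,
with `C″` depending only on `N`. -/
theorem stmt11 (N : ℕ) :
    ∃ C > (0 : ℝ), ∀ F : Set (EuclideanSpace ℝ (Fin N)), F.Nonempty → IsClosed F →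
      ∀ μ : Measure (EuclideanSpace ℝ (Fin N)), IsFiniteMeasure μ → μ F = 0 →
        (∫⁻ y in F, ∫⁻ z in Fᶜ,
            ENNReal.ofReal (Metric.infDist z F / ‖y - z‖ ^ (N + 1)) ∂μ) ≤
          ENNReal.ofReal C * μ Fᶜ := by
  set K : ℝ≥0∞ := 2 ^ (N + 1) * volume (ball (0 : EuclideanSpace ℝ (Fin N)) 1)
  have hK_top : K ≠ ⊤ := ENNReal.mul_ne_top (by simp) measure_ball_lt_top.ne
  have hK_pos : K ≠ 0 := mul_ne_zero (by simp) (measure_ball_pos _ _ one_pos).ne'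
  refine ⟨K.toReal, ENNReal.toReal_pos hK_pos hK_top, fun F _ _ μ _ _ => ?_⟩
  have hmeas : Measurable fun p : EuclideanSpace ℝ (Fin N) × EuclideanSpace ℝ (Fin N) =>
      ENNReal.ofReal (infDist p.2 F / ‖p.1 - p.2‖ ^ (N + 1)) := by
    fun_prop
  rw [lintegral_lintegral_swap hmeas.aemeasurable, ENNReal.ofReal_toReal hK_top,
    ← setLIntegral_const]
  refine setLIntegral_mono measurable_const fun z _ => ?_
  simpa only [finrank_euclideanSpace_fin] using
    setLIntegral_infDist_div_norm_pow_le volume F z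
end
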